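/- arXiv:2301.06593 — 3 statements merged into one kernel-verified Lean document; each statement's English description precedes it below -/
import Mathlib

section
/- If C is a perfect 1-code with at least two elements in a connected graph, then there exist two elements of C at distance exactly 3. -/
/-- A set `C` of vertices is a perfect 1-code: it is independent and every vertex
outside `C` has exactly one neighbour in `C`. -/
def IsPerfectOneCode {V : Type*} (G : SimpleGraph V) (C : Set V) : Prop :=
  (∀ x ∈ C, ∀ y ∈ C, ¬ G.Adj x y) ∧ ∀ v ∉ C, ∃! c, c ∈ C ∧ G.Adj v c

private lemma walk_length_drop {V : Type*} {G : SimpleGraph V} {u v : V}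
    (p : G.Walk u v) (n : ℕ) : (p.drop n).length = p.length - n := by
  induction p generalizing n with
  | nil => simp [SimpleGraph.Walk.drop]
  | cons h q ih =>
    cases n with
    | zero => simp [SimpleGraph.Walk.drop]
    | succ n => simp [SimpleGraph.Walk.drop, ih, Nat.succ_sub_succ]

private lemma adj_dist_le_one {V : Type*} {G : SimpleGraph V} {u v : V}
    (h : G.Adj u v) : G.dist u v ≤ 1 := by
  have := SimpleGraph.dist_le (SimpleGraph.Walk.cons h SimpleGraph.Walk.nil)
  simpa using this

theorem perfectOneCode_exists_dist_three {V : Type*} (G : SimpleGraph V)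
    (hconn : G.Connected) (C : Set V) (hC : IsPerfectOneCode G C)
    (x y : V) (hx : x ∈ C) (hy : y ∈ C) (hxy : x ≠ y) :
    ∃ u ∈ C, ∃ v ∈ C, G.dist u v = 3 := by
  classical
  set S : Set ℕ := {d | ∃ u ∈ C, ∃ v ∈ C, u ≠ v ∧ G.dist u v = d} with hS
  have hne : S.Nonempty := ⟨G.dist x y, x, hx, y, hy, hxy, rfl⟩
  obtain ⟨u, hu, v, hv, huv, hd⟩ := Nat.sInf_mem hne
  set d := sInf S with hdS
  have hmin : ∀ k ∈ S, d ≤ k := fun k hk => Nat.sInf_le hk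
  have hd1 : 1 ≤ d := by
    rw [← hd]; exact hconn.pos_dist_of_ne huv
  have hdne1 : d ≠ 1 := by
    intro h
    exact hC.1 u hu v hv (SimpleGraph.dist_eq_one_iff_adj.mp (hd.trans h))
  -- get a shortest walk from u to v
  obtain ⟨w, hw⟩ := hconn.exists_walk_length_eq_dist u v
  rw [hd] at hw
  have hwpos : 0 < w.length := by omega
  have hdne2 : d ≠ 2 := by
    intro h2
    have h1lt : 1 < w.length := by omega
    set p1 := w.getVert 1 with hp1
    have hup1 : G.Adj u p1 := by
      simpa using w.adj_getVert_succ (by omega : 0 < w.length)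
    have hp1v : G.Adj p1 v := by
      have := w.adj_getVert_succ h1lt
      rw [show w.getVert 2 = v by rw [show (2:ℕ) = w.length by omega]; simp] at this
      exact this
    have hp1C : p1 ∉ C := fun hmem => hC.1 u hu p1 hmem hup1
    obtain ⟨c, _, hcu⟩ := hC.2 p1 hp1C
    exact huv ((hcu u ⟨hu, hup1.symm⟩).trans (hcu v ⟨hv, hp1v⟩).symm)
  have hd3 : 3 ≤ d := by omega
  by_cases h3 : d = 3
  · exact ⟨u, hu, v, hv, hd.trans h3⟩
  have hd4 : 4 ≤ d := by omega
  exfalso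
  set p1 := w.getVert 1 with hp1
  set p2 := w.getVert 2 with hp2
  have hup1 : G.Adj u p1 := by
    simpa using w.adj_getVert_succ (by omega : 0 < w.length)
  have hp1p2 : G.Adj p1 p2 := w.adj_getVert_succ (by omega : 1 < w.length)
  have hup2 : G.dist u p2 ≤ 2 := by
    calc G.dist u p2 ≤ G.dist u p1 + G.dist p1 p2 := hconn.dist_triangle
    _ ≤ 1 + 1 := Nat.add_le_add (adj_dist_le_one hup1) (adj_dist_le_one hp1p2)
    _ = 2 := rfl
  have hp2v : G.dist p2 v ≤ d - 2 := by
    have := SimpleGraph.dist_le (w.drop 2)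
    rwa [walk_length_drop, hw] at this
  have hup2' : G.dist u p2 = 2 := by
    have htri : G.dist u v ≤ G.dist u p2 + G.dist p2 v := hconn.dist_triangle
    omega
  have hp2C : p2 ∉ C := by
    intro hmem
    have hne2 : u ≠ p2 := by
      intro h; rw [h] at hup2'; simp [SimpleGraph.dist_self] at hup2'
    have : G.dist u p2 ∈ S := ⟨u, hu, p2, hmem, hne2, rfl⟩
    have := hmin _ this
    omega
  obtain ⟨c, ⟨hcC, hcadj⟩, _⟩ := hC.2 p2 hp2C
  have hcv : c ≠ v := by
    intro h
    have h1 : G.dist p2 v ≤ 1 := by rw [← h]; exact adj_dist_le_one hcadj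
    have : G.dist u v ≤ G.dist u p2 + G.dist p2 v := hconn.dist_triangle
    omega
  have hdcv : G.dist c v ≤ G.dist c p2 + G.dist p2 v := hconn.dist_triangle
  have hcp2 : G.dist c p2 ≤ 1 := adj_dist_le_one hcadj.symm
  have : G.dist c v ∈ S := ⟨c, hcC, v, hv, hcv, rfl⟩
  have := hmin _ this
  omega
end

section
/- If a bipartite distance-regular graph Γ of diameter 3 admits a perfect 1-code C, then C has exactly two elements, lying in different parts of the bipartition at distance 3 from each other. -/
/-- A connected graph is distance-regular if for any two vertices `x, y` at distance `i`,
the numbers of neighbours of `y` at distance `i + 1` and `i - 1` from `x` are constants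
`b i` and `c i` depending only on `i`. -/
def IsDistanceRegular {V : Type*} (G : SimpleGraph V) : Prop :=
  ∃ b c : ℕ → ℕ, ∀ (i : ℕ) (x y : V), G.dist x y = i →
    {z : V | G.Adj y z ∧ G.dist x z = i + 1}.ncard = b i ∧
    {z : V | G.Adj y z ∧ G.dist x z = i - 1}.ncard = c i

section auxx
variable {V : Type*} {G : SimpleGraph V} {P C : Set V}
variable {V : Type*} {G : SimpleGraph V} {P C : Set V}

lemma walk_parity (hP : ∀ x ∈ P, ∀ y ∈ P, ¬ G.Adj x y)
    (hPc : ∀ x ∉ P, ∀ y ∉ P, ¬ G.Adj x y) :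
    ∀ {u v : V} (p : G.Walk u v), (u ∈ P ↔ v ∈ P) ↔ Even p.length := by
  intro u v p
  induction p with
  | nil => simp
  | @cons u w v h q ih =>
    have flip : u ∈ P ↔ w ∉ P := by
      by_cases hu : u ∈ P <;> by_cases hw : w ∈ P <;> simp [hu, hw]
      · exact hP u hu w hw h
      · exact hPc u hu w hw h
    rw [SimpleGraph.Walk.length_cons, Nat.even_add_one, ← ih]
    tauto

lemma no_common_nbr (hC : IsPerfectOneCode G C) {a b u : V}
    (ha : a ∈ C) (hb : b ∈ C) (hua : G.Adj u a) (hub : G.Adj u b) : a = b := by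
  have hu : u ∉ C := fun h => hC.1 u h a ha hua
  obtain ⟨c, -, huniq⟩ := hC.2 u hu
  rw [huniq a ⟨ha, hua⟩, huniq b ⟨hb, hub⟩]

lemma code_not_subset (hconn : G.Connected)
    (hP : ∀ x ∈ P, ∀ y ∈ P, ¬ G.Adj x y)
    (hPc : ∀ x ∉ P, ∀ y ∉ P, ¬ G.Adj x y)
    {u0 v0 : V} (h3 : G.dist u0 v0 = 3)
    (hC : IsPerfectOneCode G C) (hCP : ∀ c ∈ C, c ∈ P) : False := by
  by_cases hPC : ∀ v ∈ P, v ∈ C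
  · -- C = P; use a geodesic of length 3
    obtain ⟨p, hp⟩ := hconn.exists_walk_length_eq_dist u0 v0
    rw [h3] at hp
    obtain ⟨a, b, e01, e12, e23⟩ : ∃ a b, G.Adj u0 a ∧ G.Adj a b ∧ G.Adj b v0 := by
      refine ⟨p.getVert 1, p.getVert 2, ?_, p.adj_getVert_succ (by omega), ?_⟩
      · have := p.adj_getVert_succ (show 0 < p.length by omega)
        rwa [p.getVert_zero] at this
      · have := p.adj_getVert_succ (show 2 < p.length by omega)
        rwa [show (2:ℕ) + 1 = 3 from rfl, show p.getVert 3 = v0 by rw [← hp]; exact p.getVert_length] at this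
    have memC : ∀ x, x ∈ P ↔ x ∈ C := fun x => ⟨hPC x, hCP x⟩
    by_cases h1 : a ∈ P
    · have h3' : v0 ∈ P := by
        by_contra h
        exact hPc b (fun hb => hP a h1 b hb e12) v0 h e23
      have hav : a = v0 := no_common_nbr hC ((memC a).mp h1) ((memC v0).mp h3') e12.symm e23
      have : G.dist u0 v0 = 1 := by
        rw [SimpleGraph.dist_eq_one_iff_adj, ← hav]; exact e01
      omega
    · have h0 : u0 ∈ P := by by_contra h; exact hPc u0 h a h1 e01
      have h2 : b ∈ P := by by_contra h; exact hPc a h1 b h e12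
      have hub : u0 = b := no_common_nbr hC ((memC u0).mp h0) ((memC b).mp h2) e01.symm e12
      have : G.dist u0 v0 = 1 := by
        rw [SimpleGraph.dist_eq_one_iff_adj, hub]; exact e23
      omega
  · push_neg at hPC
    obtain ⟨v, hvP, hvC⟩ := hPC
    obtain ⟨c, ⟨hcC, hadj⟩, -⟩ := hC.2 v hvC
    exact hP v hvP c (hCP c hcC) hadj

end auxx

theorem bipartite_drg_diam_three_perfectOneCode {V : Type*} [Fintype V]
    (G : SimpleGraph V) (hconn : G.Connected) (hdrg : IsDistanceRegular G)
    (P : Set V)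
    (hP : ∀ x ∈ P, ∀ y ∈ P, ¬ G.Adj x y)
    (hPc : ∀ x ∉ P, ∀ y ∉ P, ¬ G.Adj x y)
    (hdiam : (∀ u v : V, G.dist u v ≤ 3) ∧ ∃ u v : V, G.dist u v = 3)
    (C : Set V) (hC : IsPerfectOneCode G C) :
    ∃ x y : V, x ≠ y ∧ C = {x, y} ∧ G.dist x y = 3 ∧ (x ∈ P ↔ y ∉ P) := by
  obtain ⟨hdiam1, u0, v0, h3⟩ := hdiam
  have hQ : ∀ x ∈ Pᶜ, ∀ y ∈ Pᶜ, ¬ G.Adj x y := fun x hx y hy => hPc x hx y hy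
  have hQc : ∀ x ∉ Pᶜ, ∀ y ∉ Pᶜ, ¬ G.Adj x y := fun x hx y hy =>
    hP x (Set.not_notMem.mp hx) y (Set.not_notMem.mp hy)
  have hx : ∃ x ∈ C, x ∈ P := by
    by_contra h
    push_neg at h
    exact code_not_subset hconn hQ hQc h3 hC (fun c hc => h c hc)
  have hy : ∃ y ∈ C, y ∉ P := by
    by_contra h
    push_neg at h
    exact code_not_subset hconn hP hPc h3 hC h
  obtain ⟨x, hxC, hxP⟩ := hx
  obtain ⟨y, hyC, hyP⟩ := hy
  have same : ∀ a ∈ C, ∀ b ∈ C, (a ∈ P ↔ b ∈ P) → a = b := by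
    intro a ha b hb hiff
    by_contra hne
    have hd : G.dist a b ≤ 3 := hdiam1 a b
    have hpos : 0 < G.dist a b := hconn.pos_dist_of_ne hne
    obtain ⟨p, hp⟩ := hconn.exists_walk_length_eq_dist a b
    have heven : Even (G.dist a b) := hp ▸ (walk_parity hP hPc p).mp hiff
    have h2 : G.dist a b = 2 := by
      obtain ⟨k, hk⟩ := heven; omega
    rw [← hp] at h2
    have e1 : G.Adj a (p.getVert 1) := by
      have := p.adj_getVert_succ (show 0 < p.length by omega)
      rwa [p.getVert_zero] at this
    have e2 : G.Adj (p.getVert 1) b := by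
      have := p.adj_getVert_succ (show 1 < p.length by omega)
      rwa [show (1:ℕ) + 1 = 2 from rfl,
        show p.getVert 2 = b by rw [← h2]; exact p.getVert_length] at this
    exact hne (no_common_nbr hC ha hb e1.symm e2)
  refine ⟨x, y, fun h => hyP (h ▸ hxP), ?_, ?_, by simp [hxP, hyP]⟩
  · ext c
    simp only [Set.mem_insert_iff, Set.mem_singleton_iff]
    constructor
    · intro hc
      by_cases hcP : c ∈ P
      · exact Or.inl (same c hc x hxC (iff_of_true hcP hxP))
      · exact Or.inr (same c hc y hyC (iff_of_false hcP hyP))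
    · rintro (rfl | rfl) <;> assumption
  · have hle := hdiam1 x y
    obtain ⟨p, hp⟩ := hconn.exists_walk_length_eq_dist x y
    have hodd : ¬ Even (G.dist x y) := by
      rw [← hp, ← walk_parity hP hPc p]
      simp [hxP, hyP]
    have hne1 : G.dist x y ≠ 1 := by
      rw [ne_eq, SimpleGraph.dist_eq_one_iff_adj]
      exact hC.1 x hxC y hyC
    rw [Nat.not_even_iff] at hodd
    omega
end

section
/- There is no bipartite distance-regular graph with diameter 4 whose distinct eigenvalues are exactly {k, 1, 0, -1, -k}, where k is the valency. -/
open Finset Polynomial Matrix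

theorem Matrix.IsHermitian.aeval_eq_zero {n : Type*} [Fintype n] [DecidableEq n]
    {A : Matrix n n ℝ} (hA : A.IsHermitian) {p : ℝ[X]}
    (hp : ∀ μ (v : n → ℝ), v ≠ 0 → A *ᵥ v = μ • v → p.IsRoot μ) : aeval A p = 0 := by
  rw [← cfc_polynomial p A hA.isSelfAdjoint, ← cfc_zero ℝ A]
  refine cfc_congr fun μ hμ => ?_
  rw [← Matrix.spectrum_toLin', ← Module.End.hasEigenvalue_iff_mem_spectrum] at hμ
  obtain ⟨v, hv⟩ := hμ.exists_hasEigenvector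
  exact hp μ v hv.2 (by simpa using hv.apply_eq_smul)

namespace SimpleGraph

variable {V : Type*} {G : SimpleGraph V} {x y z : V}

theorem exists_adj_dist_eq_dist_sub_one (h : G.dist x y ≠ 0) :
    ∃ z, G.Adj z y ∧ G.dist x z = G.dist x y - 1 := by
  obtain ⟨p, hp⟩ := exists_walk_of_dist_ne_zero h
  have hnil : ¬ p.Nil := by
    rw [← Walk.length_eq_zero_iff]
    omega
  refine ⟨p.penultimate, p.adj_penultimate hnil, ?_⟩
  have hle : G.dist x p.penultimate ≤ p.length - 1 := p.length_dropLast ▸ dist_le p.dropLast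
  rcases (p.adj_penultimate hnil).diff_dist_adj (u := x) with h' | h' | h' <;> omega

theorem exists_dist_eq_of_le {i : ℕ} (hi : i ≤ G.dist x y) : ∃ z, G.dist x z = i := by
  obtain ⟨n, hn⟩ := Nat.exists_eq_add_of_le hi
  clear hi
  induction n generalizing y with
  | zero => exact ⟨y, hn⟩
  | succ n ih =>
    obtain ⟨z, -, hz⟩ := exists_adj_dist_eq_dist_sub_one (G := G) (x := x) (y := y) (by omega)
    exact ih (y := z) (by omega)

theorem Coloring.dist_eq_add_one_or_sub_one_of_adj (C : G.Coloring Bool) (hG : G.Connected)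
    (x : V) (hadj : G.Adj y z) : G.dist x z = G.dist x y + 1 ∨ G.dist x z = G.dist x y - 1 := by
  refine hadj.diff_dist_adj.resolve_left fun hyz => ?_
  obtain ⟨p, hp⟩ := hG.exists_walk_length_eq_dist x y
  obtain ⟨q, hq⟩ := hG.exists_walk_length_eq_dist x z
  have hy := C.even_length_iff_congr p
  have hz := C.even_length_iff_congr q
  have hne := C.valid hadj
  rw [hp, ← hyz, ← hq, hz] at hy
  revert hne hy
  cases C x <;> cases C y <;> cases C z <;> simp

theorem card_neighborFinset_filter_dist [Fintype V] [DecidableRel G.Adj] (j : ℕ) :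
    #{z ∈ G.neighborFinset y | G.dist x z = j} = {z | G.Adj y z ∧ G.dist x z = j}.ncard := by
  rw [← Set.ncard_coe_finset]
  congr
  ext z
  simp

variable (G) in
def IsDistanceRegularWith (b c : ℕ → ℕ) : Prop :=
  ∀ (i : ℕ) (x y : V), G.dist x y = i →
    {z : V | G.Adj y z ∧ G.dist x z = i + 1}.ncard = b i ∧
    {z : V | G.Adj y z ∧ G.dist x z = i - 1}.ncard = c i

variable (G) in
noncomputable def distMatrix {R : Type*} (f : ℕ → R) : Matrix V V R :=
  Matrix.of fun x y => f (G.dist x y)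

/-- Multiplication by the tridiagonal intersection matrix of a bipartite distance-regular graph;
at `i = 0` the truncated `i - 1` is harmless because `c 0 = 0`. -/
def intersectionStep {R : Type*} [Semiring R] (b c : ℕ → ℕ) (f : ℕ → R) (i : ℕ) : R :=
  c i * f (i - 1) + b i * f (i + 1)

namespace IsDistanceRegularWith

variable {b c : ℕ → ℕ} (h : G.IsDistanceRegularWith b c)
include h

theorem c_zero (x : V) : c 0 = 0 := by
  rw [← (h 0 x x dist_self).2]
  convert Set.ncard_empty V
  refine Set.eq_empty_of_forall_notMem fun z ⟨hxz, hz⟩ => ?_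
  rw [dist_eq_one_iff_adj.2 hxz] at hz
  simp at hz

theorem c_one (hG : G.Connected) (hxy : G.Adj x y) : c 1 = 1 := by
  rw [← (h 1 x y (dist_eq_one_iff_adj.2 hxy)).2, Set.ncard_eq_one]
  refine ⟨x, ?_⟩
  ext z
  simp only [Set.mem_singleton_iff, Nat.sub_self, hG.dist_eq_zero_iff]
  constructor
  · exact fun hz => hz.2.symm
  · rintro rfl
    exact ⟨hxy.symm, rfl⟩

theorem b_eq_zero {D : ℕ} (hD : ∀ u v : V, G.dist u v ≤ D) (hxy : G.dist x y = D) : b D = 0 := by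
  rw [← (h D x y hxy).1]
  convert Set.ncard_empty V
  exact Set.eq_empty_of_forall_notMem fun z ⟨_, hz⟩ => by have := hD x z; omega

theorem c_pos [Finite V] (hxy : G.dist x y ≠ 0) : 0 < c (G.dist x y) := by
  obtain ⟨z, hzy, hz⟩ := exists_adj_dist_eq_dist_sub_one hxy
  rw [← (h _ x y rfl).2]
  exact (Set.ncard_pos (Set.toFinite _)).2 ⟨z, hzy.symm, hz⟩

theorem b_pos [Finite V] (hyz : G.Adj y z) (hz : G.dist x z = G.dist x y + 1) :
    0 < b (G.dist x y) := by
  rw [← (h _ x y rfl).1]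
  exact (Set.ncard_pos (Set.toFinite _)).2 ⟨z, hyz, hz⟩

theorem sum_neighborFinset_dist [Fintype V] [DecidableRel G.Adj] {R : Type*} [Semiring R]
    (C : G.Coloring Bool) (hG : G.Connected) (f : ℕ → R) (x y : V) :
    ∑ z ∈ G.neighborFinset y, f (G.dist x z) = intersectionStep b c f (G.dist x y) := by
  generalize hi : G.dist x y = i
  have hf : ∀ z ∈ G.neighborFinset y,
      f (G.dist x z) = if G.dist x z = i + 1 then f (i + 1) else f (i - 1) := by
    intro z hz
    rcases C.dist_eq_add_one_or_sub_one_of_adj hG x ((mem_neighborFinset G y z).1 hz) with h' | h'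
    · rw [h', hi, if_pos rfl]
    · rw [h', hi, if_neg (by omega)]
  have hlow : {z ∈ G.neighborFinset y | ¬ G.dist x z = i + 1} =
      {z ∈ G.neighborFinset y | G.dist x z = i - 1} := by
    refine filter_congr fun z hz => ?_
    rcases C.dist_eq_add_one_or_sub_one_of_adj hG x ((mem_neighborFinset G y z).1 hz) with
      h' | h' <;> omega
  rw [sum_congr rfl hf, sum_ite, sum_const, sum_const, hlow, card_neighborFinset_filter_dist,
    card_neighborFinset_filter_dist, (h i x y hi).1, (h i x y hi).2, intersectionStep,
    nsmul_eq_mul, nsmul_eq_mul, add_comm]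

theorem b_add_c_eq [Fintype V] [DecidableRel G.Adj] {k : ℕ} (C : G.Coloring Bool)
    (hG : G.Connected) (hreg : G.IsRegularOfDegree k) (x y : V) :
    b (G.dist x y) + c (G.dist x y) = k := by
  have := h.sum_neighborFinset_dist C hG (fun _ => 1) x y
  simp only [sum_const, smul_eq_mul, mul_one, card_neighborFinset_eq_degree, hreg y,
    intersectionStep, Nat.cast_id] at this
  omega

theorem distMatrix_mul_adjMatrix [Fintype V] [DecidableRel G.Adj] {R : Type*} [Semiring R]
    (C : G.Coloring Bool) (hG : G.Connected) (f : ℕ → R) :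
    G.distMatrix f * G.adjMatrix R = G.distMatrix (intersectionStep b c f) := by
  ext x y
  rw [mul_adjMatrix_apply]
  exact h.sum_neighborFinset_dist C hG f x y

theorem adjMatrix_pow [Fintype V] [DecidableEq V] [DecidableRel G.Adj] {R : Type*} [Semiring R]
    (C : G.Coloring Bool) (hG : G.Connected) (n : ℕ) :
    G.adjMatrix R ^ n = G.distMatrix ((intersectionStep b c)^[n] (Pi.single 0 1)) := by
  induction n with
  | zero =>
    ext x y
    simp [distMatrix, Matrix.one_apply, Pi.single_apply, hG.dist_eq_zero_iff]
  | succ n ih =>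
    rw [pow_succ, ih, h.distMatrix_mul_adjMatrix C hG, Function.iterate_succ_apply']

theorem c_two_mul_c_three_eq [Fintype V] [DecidableEq V] [DecidableRel G.Adj] {k : ℕ} {u v : V}
    (C : G.Coloring Bool) (hG : G.Connected) (hreg : G.IsRegularOfDegree k)
    (hdiam : ∀ x y : V, G.dist x y ≤ 4) (huv : G.dist u v = 4)
    (hA : G.adjMatrix ℝ ^ 5 - ((k : ℝ) ^ 2 + 1) • G.adjMatrix ℝ ^ 3 + (k : ℝ) ^ 2 • G.adjMatrix ℝ
      = 0) :
    (c 2 * c 3 : ℝ) = (k - 1) * (c 2 + 1) := by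
  have hb : ∀ i ≤ 4, (b i : ℝ) = k - c i := fun i hi => by
    obtain ⟨z, rfl⟩ := exists_dist_eq_of_le (hi.trans huv.ge)
    rw [← h.b_add_c_eq C hG hreg u z]
    push_cast
    ring
  have hc : ∀ i, 0 < i → i ≤ 4 → (0 : ℝ) < c i := fun i hi₀ hi => by
    obtain ⟨z, rfl⟩ := exists_dist_eq_of_le (hi.trans huv.ge)
    exact_mod_cast h.c_pos (by omega)
  obtain ⟨x, hx⟩ := exists_dist_eq_of_le (show 1 ≤ G.dist u v by omega)
  obtain ⟨y, hy⟩ := exists_dist_eq_of_le (show 3 ≤ G.dist u v by omega)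
  have hc₀ := h.c_zero u
  have hc₁ := h.c_one hG (dist_eq_one_iff_adj.1 hx)
  have hc₄ : (c 4 : ℝ) = k := by
    linarith [hb 4 le_rfl, show (b 4 : ℝ) = 0 by exact_mod_cast h.b_eq_zero hdiam huv]
  have hentry : (c 3 * (c 2 * (c 1 * (c 0 * c 0 + b 0 * c 1) + b 1 * (c 2 * c 1))
      + b 2 * (c 3 * (c 2 * c 1))) + b 3 * (c 4 * (c 3 * (c 2 * c 1))) : ℝ)
      - (k ^ 2 + 1) * (c 3 * (c 2 * c 1)) = 0 := by
    simpa [h.adjMatrix_pow C hG, distMatrix, hy, intersectionStep, Function.iterate_succ_apply',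
      ← dist_eq_one_iff_adj] using congr_fun₂ hA u y
  rw [hb 0 (by norm_num), hb 1 (by norm_num), hb 2 (by norm_num), hb 3 (by norm_num), hc₀, hc₁,
    hc₄] at hentry
  have key : (c 2 * c 3 : ℝ) * ((k - 1) * (c 2 + 1) - c 2 * c 3) = 0 := by
    linear_combination hentry
  have hpos : (c 2 * c 3 : ℝ) ≠ 0 :=
    (mul_pos (hc 2 (by norm_num) (by norm_num)) (hc 3 (by norm_num) (by norm_num))).ne'
  linarith [(mul_eq_zero.1 key).resolve_left hpos]

end IsDistanceRegularWith

end SimpleGraph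

open Matrix in
theorem no_bipartite_drg_diam_four_with_eigenvalues
    {V : Type*} [Fintype V] [DecidableEq V]
    (G : SimpleGraph V) [DecidableRel G.Adj] (k : ℕ)
    (hconn : G.Connected) (hreg : G.IsRegularOfDegree k)
    (hdrg : IsDistanceRegular G)
    (P : Set V)
    (hP : ∀ x ∈ P, ∀ y ∈ P, ¬ G.Adj x y)
    (hPc : ∀ x ∉ P, ∀ y ∉ P, ¬ G.Adj x y)
    (hdiam : (∀ u v : V, G.dist u v ≤ 4) ∧ ∃ u v : V, G.dist u v = 4)
    (hspec : {μ : ℝ | ∃ v : V → ℝ, v ≠ 0 ∧ G.adjMatrix ℝ *ᵥ v = μ • v} =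
      {(k : ℝ), 1, 0, -1, -(k : ℝ)}) :
    False := by
  classical
  obtain ⟨b, c, h : G.IsDistanceRegularWith b c⟩ := hdrg
  obtain ⟨hdiam, u, v, huv⟩ := hdiam
  let C : G.Coloring Bool := SimpleGraph.Coloring.mk (fun x => decide (x ∈ P)) fun {x y} hxy => by
    by_cases hx : x ∈ P <;> by_cases hy : y ∈ P <;> simp_all
  have hA : G.adjMatrix ℝ ^ 5 - ((k : ℝ) ^ 2 + 1) • G.adjMatrix ℝ ^ 3
      + (k : ℝ) ^ 2 • G.adjMatrix ℝ = 0 := by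
    have hp := (G.isHermitian_adjMatrix ℝ).aeval_eq_zero
      (p := X ^ 5 - ((k : ℝ) ^ 2 + 1) • X ^ 3 + (k : ℝ) ^ 2 • X) fun μ w hw hμ => by
        have : μ ∈ ({(k : ℝ), 1, 0, -1, -(k : ℝ)} : Set ℝ) := hspec ▸ ⟨w, hw, hμ⟩
        simp only [IsRoot.def, eval_add, eval_sub, eval_pow, eval_X, eval_smul, smul_eq_mul]
        rcases this with rfl | rfl | rfl | rfl | rfl <;> ring
    simpa using hp
  have hrel := h.c_two_mul_c_three_eq C hconn hreg hdiam huv hA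
  obtain ⟨y, hyv, hy⟩ := SimpleGraph.exists_adj_dist_eq_dist_sub_one (huv ▸ four_ne_zero : G.dist u v ≠ 0)
  have hy₃ : G.dist u y = 3 := by omega
  have hb₃ := h.b_pos (x := u) hyv (by omega)
  have hc₃ := h.c_pos (hy₃ ▸ three_ne_zero : G.dist u y ≠ 0)
  have hk := h.b_add_c_eq C hconn hreg u y
  rw [hy₃] at hb₃ hc₃ hk
  have hc₃k : (c 3 : ℝ) + 1 ≤ k := by exact_mod_cast (show c 3 + 1 ≤ k by omega)
  have hc₃1 : (1 : ℝ) ≤ c 3 := by exact_mod_cast hc₃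
  nlinarith [mul_le_mul_of_nonneg_left hc₃k (Nat.cast_nonneg (c 2) : (0 : ℝ) ≤ c 2)]
end
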